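/- arXiv:2302.02237 — 8 statements merged into one kernel-verified Lean document; each statement's English description precedes it below -/
import Mathlib

section
/- Let N ≥ 1 be an integer and α ∈ [0,1]. Let A : {1,…,N} × {1,…,N} → {0,1} be any matrix satisfying A(i,i) = 1 for all i and A(i,j) + A(j,i) ≥ 1 for all i ≠ j. Define the strange set S(A) = { i : Σ_{j=1}^{N} A(i,j) ≤ Nα − 1 }. Then |S(A)| ≤ 2αN. -/
/-!
If `i` and `j` both lie in the strange set `S`, at least one of `A i j`, `A j i` is `1`, so the
block of `A` on `S × S` has total mass at least `|S|² / 2`. On the other hand every row of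
that block sums to at most `Nα - 1`, so `|S|² / 2 ≤ |S| (Nα - 1)`, i.e. `|S| ≤ 2(Nα - 1)`.
-/

open Finset

section PairwiseCover

variable {ι : Type*} (S : Finset ι) (A : ι → ι → ℝ)

theorem card_sq_le_two_mul_sum_of_one_le_add_swap
    (hA : ∀ i ∈ S, ∀ j ∈ S, 1 ≤ A i j + A j i) :
    (#S : ℝ) ^ 2 ≤ 2 * ∑ i ∈ S, ∑ j ∈ S, A i j :=
  calc (#S : ℝ) ^ 2 = ∑ i ∈ S, ∑ j ∈ S, (1 : ℝ) := by simp [sq]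
    _ ≤ ∑ i ∈ S, ∑ j ∈ S, (A i j + A j i) :=
      sum_le_sum fun i hi => sum_le_sum fun j hj => hA i hi j hj
    _ = 2 * ∑ i ∈ S, ∑ j ∈ S, A i j := by
      simp only [sum_add_distrib]
      rw [sum_comm (f := fun i j => A j i)]
      ring

theorem card_le_two_mul_of_row_sum_le (hS : S.Nonempty)
    (hA : ∀ i ∈ S, ∀ j ∈ S, 1 ≤ A i j + A j i) {c : ℝ}
    (hrow : ∀ i ∈ S, ∑ j ∈ S, A i j ≤ c) :
    (#S : ℝ) ≤ 2 * c := by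
  have hcard : (0 : ℝ) < #S := by exact_mod_cast hS.card_pos
  have htotal : ∑ i ∈ S, ∑ j ∈ S, A i j ≤ #S * c := by
    simpa using sum_le_card_nsmul S _ c hrow
  nlinarith [card_sq_le_two_mul_sum_of_one_le_add_swap S A hA]

end PairwiseCover

theorem strange_set_card_le_general (N : ℕ) (α : ℝ) (hα0 : 0 ≤ α)
    (A : Fin N → Fin N → ℝ)
    (hA01 : ∀ i j, A i j = 0 ∨ A i j = 1)
    (hdiag : ∀ i, A i i = 1)
    (hpair : ∀ i j, i ≠ j → 1 ≤ A i j + A j i) :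
    ((Finset.univ.filter (fun i : Fin N => ∑ j, A i j ≤ (N : ℝ) * α - 1)).card : ℝ)
      ≤ 2 * α * N := by
  set S := univ.filter fun i : Fin N => ∑ j, A i j ≤ (N : ℝ) * α - 1
  have hnonneg : ∀ i j, 0 ≤ A i j := fun i j => by rcases hA01 i j with h | h <;> simp [h]
  have hcover : ∀ i ∈ S, ∀ j ∈ S, 1 ≤ A i j + A j i := by
    intro i _ j _
    rcases eq_or_ne i j with rfl | hij
    · linarith [hdiag i]
    · exact hpair i j hij
  have hrow : ∀ i ∈ S, ∑ j ∈ S, A i j ≤ (N : ℝ) * α - 1 := fun i hi =>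
    (sum_le_univ_sum_of_nonneg (hnonneg i)).trans (mem_filter.mp hi).2
  rcases S.eq_empty_or_nonempty with hS | hS
  · rw [hS, card_empty, Nat.cast_zero]
    positivity
  · linarith [card_le_two_mul_of_row_sum_le S A hS hcover hrow]

/-- Deterministic counting lemma: in a 0/1 comparison matrix with ones on the
diagonal and `A i j + A j i ≥ 1` off the diagonal, the number of rows whose
row sum is at most `N*α - 1` is bounded by `2*α*N`. -/
theorem strange_set_card_le (N : ℕ) (hN : 1 ≤ N) (α : ℝ) (hα0 : 0 ≤ α) (hα1 : α ≤ 1)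
    (A : Fin N → Fin N → ℝ)
    (hA01 : ∀ i j, A i j = 0 ∨ A i j = 1)
    (hdiag : ∀ i, A i i = 1)
    (hpair : ∀ i j, i ≠ j → 1 ≤ A i j + A j i) :
    ((Finset.univ.filter (fun i : Fin N => ∑ j, A i j ≤ (N : ℝ) * α - 1)).card : ℝ)
      ≤ 2 * α * N :=
  strange_set_card_le_general N α hα0 A hA01 hdiag hpair
end

section
/- Let E be a set, N ≥ 1 an integer, and g : {1,…,N} × {1,…,N} → (E → ℝ) a family of real-valued functions on E satisfying the symmetry g(l,j) = g(j,l) for all l, j. For any points x_1, …, x_N ∈ E define A(l,j) = 1 if g(l,j)(x_l) ≥ g(l,j)(x_j) and A(l,j) = 0 otherwise. Then A(l,l) = 1 for every l, A(l,j) + A(j,l) ≥ 1 for every l, j, and consequently, for every α ∈ [0,1], the number of indices l with Σ_{j=1}^{N} A(l,j) ≤ Nα − 1 is at most 2αN. -/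
/-!
Restricted to the set `S` of rows whose sum is at most `c`, the relation `1 ≤ A l j + A j l`
forces the entries of the principal submatrix on `S` to add up to at least `|S|² / 2`,
while each of its `|S|` rows adds up to at most `c`; hence `|S| ≤ 2c`.
-/

open Finset

open scoped Classical

section PairwiseDominant

variable {ι : Type*} (A : ι → ι → ℝ)

theorem card_sq_le_two_mul_sum_of_one_le_add (hpair : ∀ l j, 1 ≤ A l j + A j l)
    (S : Finset ι) : (#S : ℝ) ^ 2 ≤ 2 * ∑ l ∈ S, ∑ j ∈ S, A l j :=
  calc (#S : ℝ) ^ 2 = ∑ l ∈ S, ∑ j ∈ S, (1 : ℝ) := by simp [sq]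
    _ ≤ ∑ l ∈ S, ∑ j ∈ S, (A l j + A j l) := by gcongr with l _ j _; exact hpair l j
    _ = 2 * ∑ l ∈ S, ∑ j ∈ S, A l j := by
      simp only [sum_add_distrib]
      linarith [sum_comm (s := S) (t := S) (f := A)]

theorem card_filter_sum_le_two_mul_max [Fintype ι] (hA : ∀ l j, 0 ≤ A l j)
    (hpair : ∀ l j, 1 ≤ A l j + A j l) (c : ℝ) :
    (#(univ.filter fun l => ∑ j, A l j ≤ c) : ℝ) ≤ 2 * max c 0 := by
  set S := univ.filter fun l => ∑ j, A l j ≤ c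
  rcases S.eq_empty_or_nonempty with hS | hS
  · simp [hS]
  have hrows : ∑ l ∈ S, ∑ j ∈ S, A l j ≤ #S * c :=
    calc ∑ l ∈ S, ∑ j ∈ S, A l j ≤ ∑ l ∈ S, ∑ j, A l j :=
          sum_le_sum fun l _ => sum_le_sum_of_subset_of_nonneg (subset_univ S) fun j _ _ => hA l j
      _ ≤ ∑ _l ∈ S, c := sum_le_sum fun l hl => (mem_filter.mp hl).2
      _ = #S * c := by rw [sum_const, nsmul_eq_mul]
  have hcard : (0 : ℝ) < #S := by exact_mod_cast hS.card_pos
  have hsq : (#S : ℝ) * #S ≤ #S * (2 * c) := by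
    linarith [sq (#S : ℝ), card_sq_le_two_mul_sum_of_one_le_add A hpair S]
  linarith [le_of_mul_le_mul_left hsq hcard, le_max_left c 0]

end PairwiseDominant

theorem one_le_ite_le_add_ite_le {α : Type*} [LinearOrder α] (a b : α) :
    (1 : ℝ) ≤ (if b ≤ a then 1 else 0) + (if a ≤ b then 1 else 0) := by
  rcases le_total a b with h | h <;> simp only [h, if_true] <;> split_ifs <;> norm_num

theorem comparison_matrix_strange_set_general (E : Type*) (N : ℕ)
    (g : Fin N → Fin N → E → ℝ) (hsym : ∀ l j, g l j = g j l)
    (x : Fin N → E)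
    (A : Fin N → Fin N → ℝ)
    (hA : ∀ l j, A l j = if g l j (x l) ≥ g l j (x j) then 1 else 0) :
    (∀ l, A l l = 1) ∧ (∀ l j, 1 ≤ A l j + A j l) ∧
      (∀ α : ℝ, 0 ≤ α → α ≤ 1 →
        ((Finset.univ.filter (fun l : Fin N => ∑ j, A l j ≤ (N : ℝ) * α - 1)).card : ℝ)
          ≤ 2 * α * N) := by
  have hdiag : ∀ l, A l l = 1 := fun l => by simp [hA]
  have hpair : ∀ l j, 1 ≤ A l j + A j l := fun l j => by
    rw [hA, hA, hsym j l]
    exact one_le_ite_le_add_ite_le _ _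
  have hnonneg : ∀ l j, 0 ≤ A l j := fun l j => by rw [hA]; split_ifs <;> norm_num
  refine ⟨hdiag, hpair, fun α hα _ => ?_⟩
  calc _ ≤ 2 * max ((N : ℝ) * α - 1) 0 := card_filter_sum_le_two_mul_max A hnonneg hpair _
    _ ≤ 2 * α * N := by
      have : 0 ≤ α * N := by positivity
      rw [mul_assoc]
      gcongr
      exact max_le (by linarith) this

/-- For a symmetric family of score functions `g l j = g j l : E → ℝ` and points
`x 1, …, x N`, the comparison matrix `A l j = 1{g l j (x l) ≥ g l j (x j)}` has
ones on the diagonal, satisfies `A l j + A j l ≥ 1`, and consequently for every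
`α ∈ [0,1]` the number of rows with row sum at most `N*α - 1` is at most `2*α*N`. -/
theorem comparison_matrix_strange_set (E : Type*) (N : ℕ) (hN : 1 ≤ N)
    (g : Fin N → Fin N → E → ℝ) (hsym : ∀ l j, g l j = g j l)
    (x : Fin N → E)
    (A : Fin N → Fin N → ℝ)
    (hA : ∀ l j, A l j = if g l j (x l) ≥ g l j (x j) then 1 else 0) :
    (∀ l, A l l = 1) ∧ (∀ l j, 1 ≤ A l j + A j l) ∧
      (∀ α : ℝ, 0 ≤ α → α ≤ 1 →
        ((Finset.univ.filter (fun l : Fin N => ∑ j, A l j ≤ (N : ℝ) * α - 1)).card : ℝ)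
          ≤ 2 * α * N) :=
  comparison_matrix_strange_set_general E N g hsym x A hA
end

section
/- Let E be a measurable space, N ≥ 1, and let (X_1, …, X_N) be exchangeable E-valued random variables on a probability space. Let S : E^N → (finite subsets of {1,…,N}) be measurable and equivariant, meaning that for every permutation σ of {1,…,N} and every x ∈ E^N, j ∈ S(x ∘ σ) if and only if σ(j) ∈ S(x), where (x ∘ σ)_i = x_{σ(i)}. Then for every index i, P[ i ∈ S(X_1,…,X_N) ] = E[ |S(X_1,…,X_N)| ] / N. In particular, if there is an integer m with |S(x)| ≤ m for all x ∈ E^N, then P[ i ∈ S(X_1,…,X_N) ] ≤ m/N for every i. -/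
/-!
Exchangeability and equivariance together say that the events `{σ j ∈ S X}` and `{j ∈ S X}`
have the same probability, so all `N` events `{j ∈ S X}` are equally likely. Summing their
probabilities gives `E[|S X|]`, hence each one has probability `E[|S X|] / N`.
-/

open MeasureTheory
open scoped Classical

section Selection

variable {Ω E ι : Type*} [MeasurableSpace Ω] [MeasurableSpace E]

lemma measure_mem_selection_perm_eq (P : Measure Ω) {X : Ω → ι → E} (hX : Measurable X)
    (σ : Equiv.Perm ι)
    (hexch : Measure.map (fun ω i => X ω (σ i)) P = Measure.map X P)
    {S : (ι → E) → Finset ι} (hSmeas : ∀ j, MeasurableSet {x : ι → E | j ∈ S x})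
    (hequiv : ∀ (x : ι → E) (j : ι), j ∈ S (fun i => x (σ i)) ↔ σ j ∈ S x) (j : ι) :
    P {ω | σ j ∈ S (X ω)} = P {ω | j ∈ S (X ω)} := by
  have hXσ : Measurable fun ω i => X ω (σ i) :=
    measurable_pi_lambda _ fun i => (measurable_pi_apply (σ i)).comp hX
  calc P {ω | σ j ∈ S (X ω)}
      = P ((fun ω i => X ω (σ i)) ⁻¹' {x | j ∈ S x}) := by
        simp only [Set.preimage_ofPred_eq, hequiv]
    _ = Measure.map X P {x | j ∈ S x} := by
        rw [← Measure.map_apply hXσ (hSmeas j), hexch]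
    _ = P {ω | j ∈ S (X ω)} := Measure.map_apply hX (hSmeas j)

lemma integral_card_eq_sum_measureReal [Fintype ι] (P : Measure Ω) [IsFiniteMeasure P]
    {T : Ω → Finset ι} (hT : ∀ j, MeasurableSet {ω | j ∈ T ω}) :
    ∫ ω, ((T ω).card : ℝ) ∂P = ∑ j, P.real {ω | j ∈ T ω} := by
  have hcard : ∀ ω, ((T ω).card : ℝ) = ∑ j, {ω | j ∈ T ω}.indicator 1 ω := by
    intro ω
    simp only [Set.indicator_apply, Set.mem_ofPred_eq, Pi.one_apply, Finset.sum_boole,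
      Finset.filter_mem_eq_inter, Finset.univ_inter]
  simp_rw [hcard]
  rw [integral_finsetSum _ fun j _ => (integrable_const 1).indicator (hT j)]
  exact Finset.sum_congr rfl fun j _ => integral_indicator_one (hT j)

end Selection

theorem equivariant_selection_prob_general {Ω E : Type*} [MeasurableSpace Ω] [MeasurableSpace E]
    (P : Measure Ω) [IsProbabilityMeasure P]
    (N : ℕ)
    (X : Ω → Fin N → E) (hX : Measurable X)
    (hexch : ∀ σ : Equiv.Perm (Fin N),
      Measure.map (fun ω => fun i => X ω (σ i)) P = Measure.map X P)
    (S : (Fin N → E) → Finset (Fin N))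
    (hSmeas : ∀ i : Fin N, MeasurableSet {x : Fin N → E | i ∈ S x})
    (hequiv : ∀ (σ : Equiv.Perm (Fin N)) (x : Fin N → E) (j : Fin N),
      j ∈ S (fun i => x (σ i)) ↔ σ j ∈ S x) :
    ∀ i : Fin N,
      (P {ω | i ∈ S (X ω)}).toReal = (∫ ω, ((S (X ω)).card : ℝ) ∂P) / N ∧
      (∀ m : ℕ, (∀ x : Fin N → E, (S x).card ≤ m) →
        (P {ω | i ∈ S (X ω)}).toReal ≤ (m : ℝ) / N) := by
  intro i
  have hN : (0 : ℝ) < N := by exact_mod_cast i.pos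
  have hequal : ∀ j, P.real {ω | j ∈ S (X ω)} = P.real {ω | i ∈ S (X ω)} := fun j => by
    rw [measureReal_def, measureReal_def,
      ← measure_mem_selection_perm_eq P hX (Equiv.swap i j) (hexch _) hSmeas (hequiv _) j,
      Equiv.swap_apply_right]
  have hmain : (P {ω | i ∈ S (X ω)}).toReal = (∫ ω, ((S (X ω)).card : ℝ) ∂P) / N := by
    rw [integral_card_eq_sum_measureReal P fun j => hX (hSmeas j),
      Finset.sum_congr rfl fun j _ => hequal j, Finset.sum_const, Finset.card_univ,
      Fintype.card_fin, nsmul_eq_mul, measureReal_def]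
    field_simp
  refine ⟨hmain, fun m hm => hmain ▸ div_le_div_of_nonneg_right ?_ hN.le⟩
  calc ∫ ω, ((S (X ω)).card : ℝ) ∂P ≤ ∫ _, (m : ℝ) ∂P :=
        integral_mono_of_nonneg (.of_forall fun _ => by positivity) (integrable_const _)
          (.of_forall fun ω => Nat.cast_le.mpr (hm (X ω)))
    _ = m := by simp

/-- For exchangeable random variables `X = (X 1, …, X N)` and an equivariant
measurable set-valued selection `S`, the probability that index `i` belongs to
`S X` equals `E[|S X|] / N`; in particular, if `|S x| ≤ m` always, this
probability is at most `m / N`. -/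
theorem equivariant_selection_prob {Ω E : Type*} [MeasurableSpace Ω] [MeasurableSpace E]
    (P : Measure Ω) [IsProbabilityMeasure P]
    (N : ℕ) (hN : 1 ≤ N)
    (X : Ω → Fin N → E) (hX : Measurable X)
    (hexch : ∀ σ : Equiv.Perm (Fin N),
      Measure.map (fun ω => fun i => X ω (σ i)) P = Measure.map X P)
    (S : (Fin N → E) → Finset (Fin N))
    (hSmeas : ∀ i : Fin N, MeasurableSet {x : Fin N → E | i ∈ S x})
    (hequiv : ∀ (σ : Equiv.Perm (Fin N)) (x : Fin N → E) (j : Fin N),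
      j ∈ S (fun i => x (σ i)) ↔ σ j ∈ S x) :
    ∀ i : Fin N,
      (P {ω | i ∈ S (X ω)}).toReal = (∫ ω, ((S (X ω)).card : ℝ) ∂P) / N ∧
      (∀ m : ℕ, (∀ x : Fin N → E, (S x).card ≤ m) →
        (P {ω | i ∈ S (X ω)}).toReal ≤ (m : ℝ) / N) :=
  equivariant_selection_prob_general P N X hX hexch S hSmeas hequiv
end

section
/- Let E be a measurable space, N ≥ 1, and let (X_1, …, X_N) be exchangeable E-valued random variables. Let G : E^N × {1,…,N} × {1,…,N} × E → ℝ be jointly measurable and satisfy (i) symmetry: G(x, l, j, ·) = G(x, j, l, ·) for all l, j and all x ∈ E^N, and (ii) equivariance: G(x ∘ σ, l, j, ·) = G(x, σ(l), σ(j), ·) for every permutation σ of {1,…,N}, where (x ∘ σ)_i = x_{σ(i)}. Define A_{l j}(x) = 1{ G(x, l, j, x_l) ≥ G(x, l, j, x_j) } and the row sums R_l(x) = Σ_{j=1}^{N} A_{l j}(x). Then the random vector (R_1(X), …, R_N(X)) is exchangeable. -/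
open MeasureTheory
open scoped Classical

/-- For exchangeable `X = (X 1, …, X N)` and a symmetric, equivariant, jointly
measurable family of score functions `G`, the vector of row sums
`R l = ∑ j 1{G x l j (x l) ≥ G x l j (x j)}` evaluated at `X` is exchangeable. -/
theorem row_sums_exchangeable {Ω E : Type*} [MeasurableSpace Ω] [MeasurableSpace E]
    (P : Measure Ω) [IsProbabilityMeasure P]
    (N : ℕ) (hN : 1 ≤ N)
    (X : Ω → Fin N → E) (hX : Measurable X)
    (hexch : ∀ σ : Equiv.Perm (Fin N),
      Measure.map (fun ω => fun i => X ω (σ i)) P = Measure.map X P)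
    (G : (Fin N → E) → Fin N → Fin N → E → ℝ)
    (hGmeas : ∀ l j : Fin N, Measurable (fun p : (Fin N → E) × E => G p.1 l j p.2))
    (hGsym : ∀ (x : Fin N → E) (l j : Fin N), G x l j = G x j l)
    (hGequiv : ∀ (σ : Equiv.Perm (Fin N)) (x : Fin N → E) (l j : Fin N),
      G (fun i => x (σ i)) l j = G x (σ l) (σ j))
    (R : (Fin N → E) → Fin N → ℝ)
    (hR : ∀ (x : Fin N → E) (l : Fin N),
      R x l = ∑ j, if G x l j (x l) ≥ G x l j (x j) then (1 : ℝ) else 0) :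
    ∀ σ : Equiv.Perm (Fin N),
      Measure.map (fun ω => fun l => R (X ω) (σ l)) P
        = Measure.map (fun ω => fun l => R (X ω) l) P := by
  -- measurability of R
  intro σ
  have hRmeas : Measurable R := by
    rw [measurable_pi_iff]
    intro l
    have : (fun x => R x l)
        = fun x => ∑ j, if G x l j (x l) ≥ G x l j (x j) then (1 : ℝ) else 0 := by
      funext x; exact hR x l
    rw [this]
    apply Finset.measurable_sum
    intro j _
    have h1 : Measurable fun x : Fin N → E => G x l j (x l) :=
      (hGmeas l j).comp (measurable_id.prodMk (measurable_pi_apply l))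
    have h2 : Measurable fun x : Fin N → E => G x l j (x j) :=
      (hGmeas l j).comp (measurable_id.prodMk (measurable_pi_apply j))
    exact Measurable.ite (measurableSet_le h2 h1) measurable_const measurable_const
  -- equivariance of R
  have hRequiv : ∀ (x : Fin N → E) (l : Fin N), R (fun i => x (σ i)) l = R x (σ l) := by
    intro x l
    rw [hR, hR]
    refine Fintype.sum_equiv σ _ _ ?_
    intro j
    rw [hGequiv σ x l j]
  have key : (fun ω => fun l => R (X ω) (σ l)) = R ∘ (fun ω => fun i => X ω (σ i)) := by
    funext ω
    simp only [Function.comp_apply]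
    funext l
    exact (hRequiv (X ω) l).symm
  have hXσ : Measurable (fun ω => fun i => X ω (σ i)) := by
    rw [measurable_pi_iff]
    intro i
    exact (measurable_pi_apply (σ i)).comp hX
  calc Measure.map (fun ω => fun l => R (X ω) (σ l)) P
      = Measure.map R (Measure.map (fun ω => fun i => X ω (σ i)) P) := by
        rw [key, ← Measure.map_map hRmeas hXσ]
    _ = Measure.map R (Measure.map X P) := by rw [hexch σ]
    _ = Measure.map (fun ω => fun l => R (X ω) l) P := by
        rw [Measure.map_map hRmeas hX]; rfl
end

section
/- Let E be a measurable space, n ≥ 1, and let (X_1, …, X_{n+1}) be exchangeable E-valued random variables. Let G : E^{n+1} × {1,…,n+1} × {1,…,n+1} × E → ℝ be jointly measurable and satisfy (i) symmetry: G(x, l, j, ·) = G(x, j, l, ·) for all l, j, and (ii) equivariance: G(x ∘ σ, l, j, ·) = G(x, σ(l), σ(j), ·) for every permutation σ of {1,…,n+1}, where (x ∘ σ)_i = x_{σ(i)}. Define A_{l j}(x) = 1{ G(x, l, j, x_l) ≥ G(x, l, j, x_j) }. Then for every α ∈ (0,1), P[ Σ_{j=1}^{n+1} A_{(n+1) j}(X_1,…,X_{n+1})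 ≤ (n+1)α − 1 ] ≤ 2α. Equivalently, with probability at least 1 − 2α, (1 + #{ i ≤ n : G(X, n+1, i, X_{n+1}) ≥ G(X, n+1, i, X_i) }) / (n+1) ≥ α. -/
open MeasureTheory
open scoped Classical ENNReal

/-- Probabilistic core of the CSForest coverage theorem: for exchangeable
`X = (X 1, …, X (n+1))` and a symmetric, equivariant, jointly measurable family
of score functions `G`, the row sum of the comparison matrix at the last index
is at most `(n+1)*α - 1` with probability at most `2*α`; equivalently, with
probability at least `1 - 2*α` the calibrated score `(1 + count)/(n+1)` is at
least `α`. -/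
theorem csforest_coverage {Ω E : Type*} [MeasurableSpace Ω] [MeasurableSpace E]
    (P : Measure Ω) [IsProbabilityMeasure P]
    (n : ℕ) (hn : 1 ≤ n)
    (X : Ω → Fin (n+1) → E) (hX : Measurable X)
    (hexch : ∀ σ : Equiv.Perm (Fin (n+1)),
      Measure.map (fun ω => fun i => X ω (σ i)) P = Measure.map X P)
    (G : (Fin (n+1) → E) → Fin (n+1) → Fin (n+1) → E → ℝ)
    (hGmeas : ∀ l j : Fin (n+1),
      Measurable (fun p : (Fin (n+1) → E) × E => G p.1 l j p.2))
    (hGsym : ∀ (x : Fin (n+1) → E) (l j : Fin (n+1)), G x l j = G x j l)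
    (hGequiv : ∀ (σ : Equiv.Perm (Fin (n+1))) (x : Fin (n+1) → E) (l j : Fin (n+1)),
      G (fun i => x (σ i)) l j = G x (σ l) (σ j))
    (α : ℝ) (hα0 : 0 < α) (hα1 : α < 1) :
    (P {ω | (∑ j, if G (X ω) (Fin.last n) j (X ω (Fin.last n))
          ≥ G (X ω) (Fin.last n) j (X ω j) then (1 : ℝ) else 0)
        ≤ ((n : ℝ) + 1) * α - 1}).toReal ≤ 2 * α ∧
    1 - 2 * α ≤ (P {ω | α ≤
      (1 + ((Finset.univ.filter (fun i : Fin n =>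
        G (X ω) (Fin.last n) i.castSucc (X ω i.castSucc)
          ≤ G (X ω) (Fin.last n) i.castSucc (X ω (Fin.last n)))).card : ℝ))
        / ((n : ℝ) + 1)}).toReal := by
  set c : ℝ := ((n : ℝ) + 1) * α with hc
  set S : (Fin (n+1) → E) → Fin (n+1) → ℝ :=
    fun x l => ∑ j, if G x l j (x l) ≥ G x l j (x j) then (1:ℝ) else 0 with hSdef
  have hterm : ∀ l j : Fin (n+1),
      Measurable (fun x : Fin (n+1) → E =>
        if G x l j (x l) ≥ G x l j (x j) then (1:ℝ) else 0) := by
    intro l j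
    have h1 : Measurable (fun x : Fin (n+1) → E => G x l j (x l)) :=
      (hGmeas l j).comp (measurable_id.prodMk (measurable_pi_apply l))
    have h2 : Measurable (fun x : Fin (n+1) → E => G x l j (x j)) :=
      (hGmeas l j).comp (measurable_id.prodMk (measurable_pi_apply j))
    exact Measurable.ite (measurableSet_le h2 h1) measurable_const measurable_const
  have hSmeas : ∀ l, Measurable (fun x => S x l) := fun l =>
    Finset.measurable_sum _ (fun j _ => hterm l j)
  have hBmeas : ∀ l, MeasurableSet {x : Fin (n+1) → E | S x l < c} := fun l =>
    measurableSet_lt (hSmeas l) measurable_const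
  -- equivariance of the row sums
  have hSperm : ∀ (σ : Equiv.Perm (Fin (n+1))) (x : Fin (n+1) → E),
      S (fun i => x (σ i)) (Fin.last n) = S x (σ (Fin.last n)) := by
    intro σ x
    calc S (fun i => x (σ i)) (Fin.last n)
        = ∑ j, if G x (σ (Fin.last n)) (σ j) (x (σ (Fin.last n)))
            ≥ G x (σ (Fin.last n)) (σ j) (x (σ j)) then (1:ℝ) else 0 :=
          Finset.sum_congr rfl (fun j _ => by rw [hGequiv σ x (Fin.last n) j])
      _ = S x (σ (Fin.last n)) := Fintype.sum_equiv σ _ _ (fun j => rfl)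
  set μ : Measure (Fin (n+1) → E) := Measure.map X P with hμ
  have hμprob : IsProbabilityMeasure μ := Measure.isProbabilityMeasure_map hX.aemeasurable
  have hmapEq : ∀ l : Fin (n+1),
      μ {x | S x (Fin.last n) < c} = μ {x | S x l < c} := by
    intro l
    set σ := Equiv.swap (Fin.last n) l with hσ
    have hXσ : Measurable (fun ω => fun i => X ω (σ i)) :=
      measurable_pi_lambda _ (fun i => (measurable_pi_apply (σ i)).comp hX)
    have h1 : μ {x | S x (Fin.last n) < c}
        = P ((fun ω => fun i => X ω (σ i)) ⁻¹' {x | S x (Fin.last n) < c}) := by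
      rw [← hexch σ, Measure.map_apply hXσ (hBmeas _)]
    have h2 : (fun ω => fun i => X ω (σ i)) ⁻¹' {x | S x (Fin.last n) < c}
        = X ⁻¹' {x | S x l < c} := by
      ext ω
      simp only [Set.mem_preimage, Set.mem_setOf_eq]
      rw [hSperm σ (X ω), hσ, Equiv.swap_apply_left]
    rw [h1, h2, hμ, Measure.map_apply hX (hBmeas l)]
  -- tournament property
  have hA1 : ∀ (x : Fin (n+1) → E) (l j : Fin (n+1)),
      (1:ℝ) ≤ (if G x l j (x l) ≥ G x l j (x j) then (1:ℝ) else 0)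
        + (if G x j l (x j) ≥ G x j l (x l) then (1:ℝ) else 0) := by
    intro x l j
    rw [← hGsym x l j]
    by_cases h : G x l j (x j) ≤ G x l j (x l)
    · rw [if_pos h]
      split_ifs <;> norm_num
    · rw [if_neg h, if_pos (le_of_not_ge h)]
      norm_num
  -- deterministic cardinality bound
  have hKbound : ∀ x : Fin (n+1) → E,
      ((Finset.univ.filter (fun l : Fin (n+1) => S x l < c)).card : ℝ)
        ≤ 2 * α * ((n:ℝ) + 1) := by
    intro x
    set T := Finset.univ.filter (fun l : Fin (n+1) => S x l < c) with hT
    by_cases hK0 : T.card = 0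
    · rw [hK0]
      push_cast
      have hn0 : (0:ℝ) ≤ (n:ℝ) := Nat.cast_nonneg n
      nlinarith
    · have hK1 : (1:ℝ) ≤ (T.card : ℝ) := by
        exact_mod_cast Nat.one_le_iff_ne_zero.mpr hK0
      set A : Fin (n+1) → Fin (n+1) → ℝ :=
        fun l j => if G x l j (x l) ≥ G x l j (x j) then 1 else 0 with hAdef
      have hArow : ∀ l, ∑ j ∈ T, A l j ≤ S x l := by
        intro l
        refine Finset.sum_le_sum_of_subset_of_nonneg (Finset.subset_univ T) ?_
        intro j _ _
        simp only [hAdef]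
        split_ifs <;> norm_num
      have hupper : ∑ l ∈ T, ∑ j ∈ T, A l j ≤ (T.card : ℝ) * c := by
        calc ∑ l ∈ T, ∑ j ∈ T, A l j
            ≤ ∑ l ∈ T, S x l := Finset.sum_le_sum (fun l _ => hArow l)
          _ ≤ ∑ _l ∈ T, c := Finset.sum_le_sum (fun l hl =>
              le_of_lt ((Finset.mem_filter.mp hl).2))
          _ = (T.card : ℝ) * c := by rw [Finset.sum_const, nsmul_eq_mul]
      have hterm2 : ∀ l ∈ T, ∀ j ∈ T, (if l = j then (2:ℝ) else 1) ≤ A l j + A j l := by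
        intro l _ j _
        by_cases hlj : l = j
        · subst hlj
          rw [if_pos rfl]
          simp only [hAdef]
          rw [if_pos (le_refl (G x l l (x l)))]
          norm_num
        · rw [if_neg hlj]; exact hA1 x l j
      have h2sum : ∑ l ∈ T, ∑ j ∈ T, (A l j + A j l)
          = 2 * ∑ l ∈ T, ∑ j ∈ T, A l j := by
        simp only [Finset.sum_add_distrib]
        rw [Finset.sum_comm (s := T) (t := T) (f := fun l j => A j l)]
        ring
      have hcount : ∑ l ∈ T, ∑ j ∈ T, (if l = j then (2:ℝ) else 1)
          = (T.card : ℝ) * (T.card : ℝ) + (T.card : ℝ) := by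
        have hrow : ∀ l ∈ T, ∑ j ∈ T, (if l = j then (2:ℝ) else 1)
            = (T.card : ℝ) + 1 := by
          intro l hl
          have : ∑ j ∈ T, (if l = j then (2:ℝ) else 1)
              = ∑ j ∈ T, ((1:ℝ) + if l = j then 1 else 0) := by
            refine Finset.sum_congr rfl fun j _ => ?_
            by_cases h : l = j <;> simp [h] <;> norm_num
          rw [this, Finset.sum_add_distrib, Finset.sum_const, nsmul_eq_mul, mul_one,
            Finset.sum_ite_eq, if_pos hl]
        rw [Finset.sum_congr rfl hrow, Finset.sum_const, nsmul_eq_mul]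
        ring
      have hlower : (T.card : ℝ) * ((T.card : ℝ) + 1)
          ≤ 2 * ∑ l ∈ T, ∑ j ∈ T, A l j := by
        rw [← h2sum]
        calc (T.card : ℝ) * ((T.card : ℝ) + 1)
            = ∑ l ∈ T, ∑ j ∈ T, (if l = j then (2:ℝ) else 1) := by rw [hcount]; ring
          _ ≤ ∑ l ∈ T, ∑ j ∈ T, (A l j + A j l) :=
            Finset.sum_le_sum (fun l hl => Finset.sum_le_sum (fun j hj => hterm2 l hl j hj))
      have hmain : (T.card : ℝ) * ((T.card : ℝ) + 1) ≤ 2 * ((T.card : ℝ) * c) := by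
        calc (T.card : ℝ) * ((T.card : ℝ) + 1)
            ≤ 2 * ∑ l ∈ T, ∑ j ∈ T, A l j := hlower
          _ ≤ 2 * ((T.card : ℝ) * c) := by linarith [hupper]
      have hce : c = ((n:ℝ) + 1) * α := hc
      nlinarith [hmain, hK1, mul_pos (lt_of_lt_of_le one_pos hK1)
        (lt_of_lt_of_le one_pos hK1)]
  -- measure bound via counting
  have hμB : μ {x | S x (Fin.last n) < c} ≤ ENNReal.ofReal (2*α) := by
    have h1 : ((n+1 : ℕ) : ℝ≥0∞) * μ {x | S x (Fin.last n) < c}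
        = ∑ l : Fin (n+1), μ {x | S x l < c} := by
      simp only [← hmapEq]
      rw [Finset.sum_const, Finset.card_univ, Fintype.card_fin, nsmul_eq_mul]
    have h2 : ∑ l : Fin (n+1), μ {x | S x l < c}
        = ∫⁻ x, (((Finset.univ.filter (fun l : Fin (n+1) => S x l < c)).card : ℕ) : ℝ≥0∞) ∂μ := by
      have heach : ∀ l : Fin (n+1), μ {x | S x l < c}
          = ∫⁻ x, Set.indicator {x' | S x' l < c} (fun _ => (1:ℝ≥0∞)) x ∂μ :=
        fun l => (lintegral_indicator_one (hBmeas l)).symm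
      rw [Finset.sum_congr rfl (fun l _ => heach l),
        ← lintegral_finset_sum _ (fun l _ =>
          (measurable_const.indicator (hBmeas l)))]
      refine lintegral_congr fun x => ?_
      rw [Finset.card_filter]
      push_cast
      refine Finset.sum_congr rfl fun l _ => ?_
      by_cases h : S x l < c <;> simp [Set.indicator, h]
    have h3 : ∫⁻ x, (((Finset.univ.filter (fun l : Fin (n+1) => S x l < c)).card : ℕ) : ℝ≥0∞) ∂μ
        ≤ ENNReal.ofReal (2*α) * ((n+1 : ℕ) : ℝ≥0∞) := by
      have hpt : ∀ x : Fin (n+1) → E,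
          (((Finset.univ.filter (fun l : Fin (n+1) => S x l < c)).card : ℕ) : ℝ≥0∞)
            ≤ ENNReal.ofReal (2 * α * ((n:ℝ) + 1)) := by
        intro x
        rw [← ENNReal.ofReal_natCast]
        exact ENNReal.ofReal_le_ofReal (hKbound x)
      calc ∫⁻ x, (((Finset.univ.filter (fun l : Fin (n+1) => S x l < c)).card : ℕ) : ℝ≥0∞) ∂μ
          ≤ ∫⁻ _x, ENNReal.ofReal (2 * α * ((n:ℝ) + 1)) ∂μ := lintegral_mono hpt
        _ = ENNReal.ofReal (2 * α * ((n:ℝ) + 1)) := by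
            rw [lintegral_const, measure_univ, mul_one]
        _ = ENNReal.ofReal (2*α) * ((n+1 : ℕ) : ℝ≥0∞) := by
            rw [ENNReal.ofReal_mul (by positivity)]
            congr 1
            rw [← ENNReal.ofReal_natCast]
            push_cast
            ring_nf
    have h4 : ((n+1 : ℕ) : ℝ≥0∞) * μ {x | S x (Fin.last n) < c}
        ≤ ((n+1 : ℕ) : ℝ≥0∞) * ENNReal.ofReal (2*α) := by
      rw [h1, h2]
      calc _ ≤ ENNReal.ofReal (2*α) * ((n+1 : ℕ) : ℝ≥0∞) := h3
        _ = ((n+1 : ℕ) : ℝ≥0∞) * ENNReal.ofReal (2*α) := mul_comm _ _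
    exact (ENNReal.mul_le_mul_iff_right (by exact_mod_cast Nat.succ_ne_zero n)
      (ENNReal.natCast_ne_top _)).mp h4
  have hpre : P (X ⁻¹' {x | S x (Fin.last n) < c}) ≤ ENNReal.ofReal (2*α) := by
    rw [← Measure.map_apply hX (hBmeas _)]
    exact hμB
  have hP1 : (P (X ⁻¹' {x | S x (Fin.last n) < c})).toReal ≤ 2*α :=
    ENNReal.toReal_le_of_le_ofReal (by positivity) hpre
  have hScount : ∀ x : Fin (n+1) → E, S x (Fin.last n)
      = 1 + ((Finset.univ.filter (fun i : Fin n =>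
          G x (Fin.last n) i.castSucc (x i.castSucc)
            ≤ G x (Fin.last n) i.castSucc (x (Fin.last n)))).card : ℝ) := by
    intro x
    show (∑ j, if G x (Fin.last n) j (x (Fin.last n))
        ≥ G x (Fin.last n) j (x j) then (1:ℝ) else 0) = _
    rw [Fin.sum_univ_castSucc]
    simp only [ge_iff_le]
    rw [if_pos (le_refl (G x (Fin.last n) (Fin.last n) (x (Fin.last n)))),
      Finset.sum_boole]
    ring
  constructor
  · refine le_trans ?_ hP1
    refine ENNReal.toReal_le_toReal (measure_ne_top _ _) (measure_ne_top _ _) |>.mpr ?_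
    refine measure_mono ?_
    intro ω hω
    simp only [Set.mem_setOf_eq] at hω
    show S (X ω) (Fin.last n) < c
    have hle : S (X ω) (Fin.last n) ≤ c - 1 := hω
    linarith
  · have hsub2 : (X ⁻¹' {x | S x (Fin.last n) < c})ᶜ ⊆
        {ω | α ≤ (1 + ((Finset.univ.filter (fun i : Fin n =>
          G (X ω) (Fin.last n) i.castSucc (X ω i.castSucc)
            ≤ G (X ω) (Fin.last n) i.castSucc (X ω (Fin.last n)))).card : ℝ))
          / ((n : ℝ) + 1)} := by
      intro ω hω
      simp only [Set.mem_compl_iff, Set.mem_preimage, Set.mem_setOf_eq, not_lt] at hω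
      show α ≤ _
      rw [le_div_iff₀ (by positivity : (0:ℝ) < (n:ℝ)+1)]
      have h := hScount (X ω)
      have hce : c = ((n:ℝ) + 1) * α := hc
      linarith
    have hmeas1 : MeasurableSet (X ⁻¹' {x | S x (Fin.last n) < c}) := hX (hBmeas _)
    have hcompl : (P (X ⁻¹' {x | S x (Fin.last n) < c})ᶜ).toReal
        = 1 - (P (X ⁻¹' {x | S x (Fin.last n) < c})).toReal := by
      rw [measure_compl hmeas1 (measure_ne_top _ _), measure_univ,
        ENNReal.toReal_sub_of_le prob_le_one ENNReal.one_ne_top, ENNReal.toReal_one]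
    have hm : (P (X ⁻¹' {x | S x (Fin.last n) < c})ᶜ).toReal
        ≤ (P {ω | α ≤ (1 + ((Finset.univ.filter (fun i : Fin n =>
          G (X ω) (Fin.last n) i.castSucc (X ω i.castSucc)
            ≤ G (X ω) (Fin.last n) i.castSucc (X ω (Fin.last n)))).card : ℝ))
          / ((n : ℝ) + 1)}).toReal :=
      ENNReal.toReal_le_toReal (measure_ne_top _ _) (measure_ne_top _ _) |>.mpr
        (measure_mono hsub2)
    linarith [hcompl, hm, hP1]
end

section
/- Let (V_1, …, V_{n+1}) be exchangeable real-valued random variables and let α ∈ (0,1). Then P[ (1 + #{ i ∈ {1,…,n} : V_{n+1} ≥ V_i }) / (n+1) ≥ α ] ≥ 1 − α. -/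
open MeasureTheory
open scoped Classical

namespace SplitConformalAux

/-- rank of coordinate `j` among values of `v` (counting ties and itself). -/
noncomputable def rnk (n : ℕ) (v : Fin (n+1) → ℝ) (j : Fin (n+1)) : ℕ :=
  (Finset.univ.filter (fun i => v i ≤ v j)).card

lemma rnk_cast (n : ℕ) (v : Fin (n+1) → ℝ) (j : Fin (n+1)) :
    (rnk n v j : ℝ) = ∑ i : Fin (n+1), if v i ≤ v j then (1:ℝ) else 0 := by
  rw [rnk, Finset.card_filter, Nat.cast_sum]
  simp

lemma measurable_rnk (n : ℕ) (j : Fin (n+1)) :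
    Measurable (fun v : Fin (n+1) → ℝ => (rnk n v j : ℝ)) := by
  simp only [rnk_cast]
  refine Finset.measurable_sum _ (fun i _ => ?_)
  exact Measurable.ite (measurableSet_le (measurable_pi_apply i) (measurable_pi_apply j))
    measurable_const measurable_const

lemma rnk_perm (n : ℕ) (v : Fin (n+1) → ℝ) (j : Fin (n+1)) :
    rnk n (fun i => v (Equiv.swap j (Fin.last n) i)) (Fin.last n) = rnk n v j := by
  unfold rnk
  simp only [Equiv.swap_apply_right]
  refine Finset.card_bij' (fun i _ => Equiv.swap j (Fin.last n) i)
    (fun i _ => Equiv.swap j (Fin.last n) i) ?_ ?_ ?_ ?_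
  · intro i hi
    simp only [Finset.mem_filter, Finset.mem_univ, true_and] at hi ⊢
    exact hi
  · intro i hi
    simp only [Finset.mem_filter, Finset.mem_univ, true_and] at hi ⊢
    rwa [Equiv.swap_apply_self]
  · intro i _; exact Equiv.swap_apply_self _ _ _
  · intro i _; exact Equiv.swap_apply_self _ _ _

/-- key combinatorial fact: at most `t` coordinates have rank `< t`. -/
lemma count_rnk_lt (n : ℕ) (v : Fin (n+1) → ℝ) (t : ℝ) (ht : 0 ≤ t) :
    ((Finset.univ.filter (fun j => (rnk n v j : ℝ) < t)).card : ℝ) ≤ t := by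
  set S := Finset.univ.filter (fun j => (rnk n v j : ℝ) < t) with hS
  rcases S.eq_empty_or_nonempty with h | h
  · simp [h, ht]
  · obtain ⟨j, hjS, hj⟩ := S.exists_max_image v h
    have hsub : S ⊆ Finset.univ.filter (fun i => v i ≤ v j) := by
      intro i hi
      simp only [Finset.mem_filter, Finset.mem_univ, true_and]
      exact hj i hi
    have hcard : S.card ≤ rnk n v j := Finset.card_le_card hsub
    have hjlt : (rnk n v j : ℝ) < t := by
      rw [hS] at hjS
      simpa using (Finset.mem_filter.mp hjS).2
    calc (S.card : ℝ) ≤ (rnk n v j : ℝ) := by exact_mod_cast hcard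
      _ ≤ t := le_of_lt hjlt

end SplitConformalAux

/-- Coverage guarantee of split conformal prediction: for exchangeable real
scores `V 1, …, V (n+1)`, with probability at least `1 - α` we have
`(1 + #{i ≤ n : V (n+1) ≥ V i}) / (n+1) ≥ α`. -/
theorem split_conformal_coverage {Ω : Type*} [MeasurableSpace Ω]
    (P : Measure Ω) [IsProbabilityMeasure P]
    (n : ℕ) (V : Ω → Fin (n+1) → ℝ) (hV : Measurable V)
    (hexch : ∀ σ : Equiv.Perm (Fin (n+1)),
      Measure.map (fun ω => fun i => V ω (σ i)) P = Measure.map V P)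
    (α : ℝ) (hα0 : 0 < α) (hα1 : α < 1) :
    1 - α ≤ (P {ω | α ≤
      (1 + ((Finset.univ.filter (fun i : Fin n =>
        V ω i.castSucc ≤ V ω (Fin.last n))).card : ℝ)) / ((n : ℝ) + 1)}).toReal := by
  classical
  open SplitConformalAux in
  set t : ℝ := α * ((n:ℝ) + 1) with htdef
  have hn1 : (0:ℝ) < (n:ℝ) + 1 := by positivity
  have ht0 : 0 < t := by positivity
  set μ : Measure (Fin (n+1) → ℝ) := Measure.map V P with hμ
  have hμprob : IsProbabilityMeasure μ := Measure.isProbabilityMeasure_map hV.aemeasurable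
  -- the bad sets
  set B : Fin (n+1) → Set (Fin (n+1) → ℝ) :=
    fun j => {v | (rnk n v j : ℝ) < t} with hB
  have hBmeas : ∀ j, MeasurableSet (B j) :=
    fun j => measurableSet_lt (measurable_rnk n j) measurable_const
  -- exchangeability: all bad sets have the same measure
  have hBeq : ∀ j, μ (B j) = μ (B (Fin.last n)) := by
    intro j
    set σ := Equiv.swap j (Fin.last n) with hσ
    have hmap : Measure.map (fun v : Fin (n+1) → ℝ => fun i => v (σ i)) μ = μ := by
      rw [hμ, Measure.map_map _ hV]
      · exact hexch σ
      · exact measurable_pi_lambda _ (fun i => measurable_pi_apply (σ i))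
    have hpre : (fun v : Fin (n+1) → ℝ => fun i => v (σ i)) ⁻¹' (B (Fin.last n)) = B j := by
      ext v
      simp only [Set.mem_preimage, hB, Set.mem_setOf_eq]
      rw [rnk_perm n v j]
    calc μ (B j) = μ ((fun v : Fin (n+1) → ℝ => fun i => v (σ i)) ⁻¹' (B (Fin.last n))) := by
          rw [hpre]
      _ = Measure.map (fun v : Fin (n+1) → ℝ => fun i => v (σ i)) μ (B (Fin.last n)) := by
          rw [Measure.map_apply
            (measurable_pi_lambda _ (fun i => measurable_pi_apply (σ i)))
            (hBmeas (Fin.last n))]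
      _ = μ (B (Fin.last n)) := by rw [hmap]
  -- sum of measures of bad sets equals integral of count
  have hsum : ∑ j : Fin (n+1), μ (B j) ≤ ENNReal.ofReal t := by
    have h1 : ∑ j : Fin (n+1), μ (B j)
        = ∫⁻ v, ∑ j : Fin (n+1), (B j).indicator (1 : (Fin (n+1) → ℝ) → ENNReal) v ∂μ := by
      rw [MeasureTheory.lintegral_finset_sum _
        (fun j _ => measurable_one.indicator (hBmeas j))]
      congr 1
      ext j
      rw [lintegral_indicator_one (hBmeas j)]
    rw [h1]
    have h2 : ∀ v, ∑ j : Fin (n+1), (B j).indicator (1 : (Fin (n+1) → ℝ) → ENNReal) v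
        ≤ ENNReal.ofReal t := by
      intro v
      have : ∑ j : Fin (n+1), (B j).indicator (1 : (Fin (n+1) → ℝ) → ENNReal) v
          = ((Finset.univ.filter (fun j => (rnk n v j : ℝ) < t)).card : ENNReal) := by
        rw [Finset.card_filter, Nat.cast_sum]
        refine Finset.sum_congr rfl (fun j _ => ?_)
        by_cases hj : (rnk n v j : ℝ) < t
        · simp [Set.indicator, hB, hj]
        · simp [Set.indicator, hB, hj]
      rw [this]
      have := count_rnk_lt n v t ht0.le
      calc ((Finset.univ.filter (fun j => (rnk n v j : ℝ) < t)).card : ENNReal)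
          = ENNReal.ofReal ((Finset.univ.filter (fun j => (rnk n v j : ℝ) < t)).card : ℝ) := by
            rw [ENNReal.ofReal_natCast]
        _ ≤ ENNReal.ofReal t := ENNReal.ofReal_le_ofReal this
    calc ∫⁻ v, ∑ j : Fin (n+1), (B j).indicator (1 : (Fin (n+1) → ℝ) → ENNReal) v ∂μ
        ≤ ∫⁻ _, ENNReal.ofReal t ∂μ := lintegral_mono h2
      _ = ENNReal.ofReal t := by simp [lintegral_const]
  -- hence μ (B last) ≤ ofReal α
  have hμB : μ (B (Fin.last n)) ≤ ENNReal.ofReal α := by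
    have hsum' : ((n:ENNReal) + 1) * μ (B (Fin.last n)) ≤ ENNReal.ofReal t := by
      have : ∑ j : Fin (n+1), μ (B j) = ((n:ENNReal) + 1) * μ (B (Fin.last n)) := by
        rw [Finset.sum_congr rfl (fun j _ => hBeq j), Finset.sum_const]
        simp [mul_comm]
      rwa [← this]
    have ht' : ENNReal.ofReal t = ENNReal.ofReal α * ((n:ENNReal) + 1) := by
      rw [htdef, ENNReal.ofReal_mul hα0.le]
      congr 1
      rw [ENNReal.ofReal_add (by positivity) zero_le_one]
      simp
    rw [ht', mul_comm (ENNReal.ofReal α) _] at hsum'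
    have hne : ((n:ENNReal) + 1) ≠ 0 := by simp
    have hnt : ((n:ENNReal) + 1) ≠ ⊤ := by
      simp [ENNReal.add_ne_top]
    exact (ENNReal.mul_le_mul_iff_right hne hnt).mp hsum'
  -- relate the good event to the complement of the bad set
  have hkey : ∀ v : Fin (n+1) → ℝ,
      (α ≤ (1 + ((Finset.univ.filter (fun i : Fin n =>
        v i.castSucc ≤ v (Fin.last n))).card : ℝ)) / ((n : ℝ) + 1)) ↔ v ∉ B (Fin.last n) := by
    intro v
    have hr : (rnk n v (Fin.last n) : ℝ)
        = 1 + ((Finset.univ.filter (fun i : Fin n =>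
          v i.castSucc ≤ v (Fin.last n))).card : ℝ) := by
      rw [rnk_cast, Fin.sum_univ_castSucc]
      have hlast : (if v (Fin.last n) ≤ v (Fin.last n) then (1:ℝ) else 0) = 1 := by simp
      rw [hlast, Finset.card_filter, Nat.cast_sum]
      rw [add_comm]
      congr 1
      refine Finset.sum_congr rfl (fun i _ => ?_)
      by_cases h : v i.castSucc ≤ v (Fin.last n) <;> simp [h]
    simp only [hB, Set.mem_setOf_eq, not_lt, hr, htdef]
    rw [le_div_iff₀ hn1, mul_comm]
  have hGset : {ω | α ≤ (1 + ((Finset.univ.filter (fun i : Fin n =>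
        V ω i.castSucc ≤ V ω (Fin.last n))).card : ℝ)) / ((n : ℝ) + 1)}
      = V ⁻¹' (B (Fin.last n))ᶜ := by
    ext ω
    simp only [Set.mem_setOf_eq, Set.mem_preimage, Set.mem_compl_iff]
    exact hkey (V ω)
  rw [hGset]
  have hPG : P (V ⁻¹' (B (Fin.last n))ᶜ) = 1 - μ (B (Fin.last n)) := by
    rw [← Measure.map_apply hV (hBmeas (Fin.last n)).compl, ← hμ]
    rw [measure_compl (hBmeas (Fin.last n)) (measure_ne_top μ _)]
    simp [measure_univ]
  rw [hPG]
  have hμB1 : μ (B (Fin.last n)) ≤ 1 := prob_le_one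
  rw [ENNReal.toReal_sub_of_le hμB1 (by simp)]
  simp only [ENNReal.toReal_one]
  have : (μ (B (Fin.last n))).toReal ≤ α := by
    calc (μ (B (Fin.last n))).toReal ≤ (ENNReal.ofReal α).toReal :=
        ENNReal.toReal_mono (by simp) hμB
      _ = α := ENNReal.toReal_ofReal hα0.le
    
  linarith
end

section
/- Let (V_1, …, V_N) be exchangeable real-valued random variables and let t ≥ 0 be a real number. Then P[ #{ i ∈ {1,…,N} : V_i ≤ V_N } ≤ t ] ≤ ⌊t⌋ / N. -/
/-!
Let `m = ⌊t⌋` and call an index `j` small if at most `m` of the values are `≤ V j`.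
Exchangeability makes the probability of "`j` is small" the same for every `j`. Pointwise, at
most `m` indices are small, since all of them lie below the largest small value. Summing over
`j`, `N · P[N is small] ≤ m`.
-/

open MeasureTheory Finset
open scoped Classical ENNReal

section Rank

variable {ι α : Type*} [Fintype ι] [LinearOrder α]

def rank (v : ι → α) (j : ι) : ℕ := #{i | v i ≤ v j}

theorem card_filter_rank_le_le (v : ι → α) (m : ℕ) : #{j | rank v j ≤ m} ≤ m := by
  obtain hempty | hne := (univ.filter fun j => rank v j ≤ m).eq_empty_or_nonempty
  · simp [hempty]
  -- every index of rank `≤ m` lies below the largest of them, whose rank is `≤ m`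
  obtain ⟨j, hj, hmax⟩ := exists_max_image _ v hne
  calc #{j | rank v j ≤ m} ≤ #{i | v i ≤ v j} :=
        card_le_card fun i hi => mem_filter.2 ⟨mem_univ i, hmax i hi⟩
    _ ≤ m := (mem_filter.1 hj).2

theorem rank_comp_perm (v : ι → α) (σ : Equiv.Perm ι) (j : ι) :
    rank (v ∘ σ) j = rank v (σ j) := by
  simp only [rank, card_filter, Function.comp_apply]
  exact Equiv.sum_comp σ fun i => if v i ≤ v (σ j) then 1 else 0

theorem measurable_rank [TopologicalSpace α] [MeasurableSpace α] [OpensMeasurableSpace α]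
    [OrderClosedTopology α] [SecondCountableTopology α] (j : ι) :
    Measurable fun v : ι → α => rank v j := by
  simp only [rank, card_filter]
  exact Finset.measurable_sum _ fun i _ => Measurable.ite
    (measurableSet_le (measurable_pi_apply i) (measurable_pi_apply j))
    measurable_const measurable_const

end Rank

theorem sum_measure_le_of_forall_card_le {Ω ι : Type*} [MeasurableSpace Ω] [Fintype ι]
    (μ : Measure Ω) {E : ι → Set Ω} (hE : ∀ i, MeasurableSet (E i)) {m : ℕ}
    (h : ∀ ω, #{i | ω ∈ E i} ≤ m) : ∑ i, μ (E i) ≤ m * μ Set.univ := by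
  calc ∑ i, μ (E i) = ∫⁻ ω, ∑ i, (E i).indicator 1 ω ∂μ := by
        rw [lintegral_finsetSum _ fun i _ => measurable_one.indicator (hE i)]
        simp only [lintegral_indicator_one (hE _)]
    _ = ∫⁻ ω, (#{i | ω ∈ E i} : ℝ≥0∞) ∂μ := by
        simp only [Set.indicator_apply, Pi.one_apply, sum_boole]
    _ ≤ ∫⁻ _, (m : ℝ≥0∞) ∂μ := lintegral_mono fun ω => Nat.cast_le.2 (h ω)
    _ = m * μ Set.univ := lintegral_const _

def Exchangeable {Ω ι α : Type*} [MeasurableSpace Ω] [MeasurableSpace α]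
    (P : Measure Ω) (V : Ω → ι → α) : Prop :=
  ∀ σ : Equiv.Perm ι, P.map (fun ω i => V ω (σ i)) = P.map V

namespace Exchangeable

variable {Ω ι α : Type*} [MeasurableSpace Ω] [MeasurableSpace α]
  {P : Measure Ω} {V : Ω → ι → α}

theorem measure_comp_perm_mem (hexch : Exchangeable P V) (hV : Measurable V)
    (σ : Equiv.Perm ι) {A : Set (ι → α)} (hA : MeasurableSet A) :
    P {ω | V ω ∘ σ ∈ A} = P (V ⁻¹' A) := by
  have hVσ : Measurable fun ω i => V ω (σ i) :=
    measurable_pi_lambda _ fun i => (measurable_pi_apply (σ i)).comp hV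
  have := congrArg (· A) (hexch σ)
  rwa [Measure.map_apply hVσ hA, Measure.map_apply hV hA] at this

variable [Fintype ι] [LinearOrder α] [TopologicalSpace α] [OpensMeasurableSpace α]
  [OrderClosedTopology α] [SecondCountableTopology α]

theorem measure_rank_le_eq (hexch : Exchangeable P V) (hV : Measurable V) (m : ℕ) (j k : ι) :
    P {ω | rank (V ω) j ≤ m} = P {ω | rank (V ω) k ≤ m} := by
  have hswap : ∀ ω, rank (V ω ∘ Equiv.swap k j) k = rank (V ω) j := fun ω => by
    rw [rank_comp_perm, Equiv.swap_apply_left]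
  simp only [← hswap]
  exact hexch.measure_comp_perm_mem hV _ (measurable_rank k measurableSet_Iic)

theorem card_mul_measure_rank_le_le (hexch : Exchangeable P V) (hV : Measurable V)
    (m : ℕ) (j : ι) :
    Fintype.card ι * P {ω | rank (V ω) j ≤ m} ≤ m * P Set.univ := by
  calc Fintype.card ι * P {ω | rank (V ω) j ≤ m} = ∑ k, P {ω | rank (V ω) k ≤ m} := by
        simp [hexch.measure_rank_le_eq hV m _ j]
    _ ≤ m * P Set.univ :=
        sum_measure_le_of_forall_card_le P (E := fun k => {ω | rank (V ω) k ≤ m})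
          (fun k => hV (measurable_rank k measurableSet_Iic))
          fun ω => by simpa only [Set.mem_ofPred_eq] using card_filter_rank_le_le (V ω) m

end Exchangeable

/-- Rank bound for exchangeable random variables: for exchangeable real-valued
`V 1, …, V N` (with `N = n+1 ≥ 1`) and `t ≥ 0`, the probability that at most `t`
of the values are `≤ V N` is bounded by `⌊t⌋ / N`. -/
theorem exchangeable_rank_bound {Ω : Type*} [MeasurableSpace Ω]
    (P : Measure Ω) [IsProbabilityMeasure P]
    (n : ℕ) (V : Ω → Fin (n+1) → ℝ) (hV : Measurable V)
    (hexch : ∀ σ : Equiv.Perm (Fin (n+1)),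
      Measure.map (fun ω => fun i => V ω (σ i)) P = Measure.map V P)
    (t : ℝ) (ht : 0 ≤ t) :
    (P {ω | ((Finset.univ.filter (fun i : Fin (n+1) =>
        V ω i ≤ V ω (Fin.last n))).card : ℝ) ≤ t}).toReal
      ≤ (⌊t⌋₊ : ℝ) / ((n : ℝ) + 1) := by
  have hevent : {ω | ((Finset.univ.filter (fun i : Fin (n+1) =>
      V ω i ≤ V ω (Fin.last n))).card : ℝ) ≤ t} = {ω | rank (V ω) (Fin.last n) ≤ ⌊t⌋₊} := by
    ext ω
    exact (Nat.le_floor_iff ht).symm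
  have hbound := Exchangeable.card_mul_measure_rank_le_le hexch hV ⌊t⌋₊ (Fin.last n)
  rw [hevent, le_div_iff₀ (by positivity), mul_comm]
  simpa [ENNReal.toReal_mul, ENNReal.toReal_add] using ENNReal.toReal_mono (by simp) hbound
end

section
/- Let (X, A, ν) be a σ-finite measure space. For k = 1, …, K let P_k be a probability measure on X with density f_k with respect to ν, let μ : X → (0, ∞) be measurable and ν-integrable, define the score s_k(x) = f_k(x)/μ(x), and let F_k(t) = P_k({ x' : s_k(x') ≤ t }). Fix α ∈ (0,1) and assume that for each k the distribution of s_k(X) under X ∼ P_k is atomless. Define the oracle set-valued prediction C(x) = { k : F_k(s_k(x)) ≥ α }. Then for every measurable set-valued prediction C' : X → (subsets of {1,…,K}) such that each set { x : k ∈ C'(x) } is measurable and P_k({ x : k ∈ C'(x) }) ≥ 1 − α for every k = 1, …, K, one has ∫ |C'(x)| μ(x) dν(x) ≥ ∫ |C(x)| μ(x) dν(x), where |C(x)| denotes the cardinality of C(x). That is, C solves the problem of minimizing the μ-weighted expected prediction-set size subject to per-class coverage at least 1 − α. -/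
/-!
Per class, the problem decouples: minimize `∫_B μ dν` over measurable `B` with `P_k(B) ≥ 1 - α`.
This is a Neyman–Pearson problem. Since the score distribution is atomless and supported on
`[0, ∞)`, the oracle region `{α ≤ F_k(s_k)}` is a superlevel set `{s_k ≥ c}` of the likelihood
ratio `f_k / μ`, with threshold `c > 0` and `P_k`-mass at most `1 - α`. Summing over the classes
gives the bound on the expected set size, since `∫ |C(x)| μ dν = ∑_k ∫_{k ∈ C} μ dν`.
-/

open MeasureTheory

section

open ProbabilityTheory Set Filter

theorem StieltjesFunction.setOf_le_eq_Ici_sInf (F : StieltjesFunction ℝ) {α : ℝ}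
    (hne : ∃ t, α ≤ F t) (hlow : ∃ t, F t < α) :
    {t | α ≤ F t} = Ici (sInf {t | α ≤ F t}) := by
  set S := {t | α ≤ F t}
  have hbdd : BddBelow S := by
    obtain ⟨b, hb⟩ := hlow
    exact ⟨b, fun t ht => le_of_not_gt fun htb => (hb.trans_le' (F.mono htb.le)).not_ge ht⟩
  have hright : ∀ t > sInf S, t ∈ S := fun t ht => by
    obtain ⟨a, haS, hat⟩ := exists_lt_of_csInf_lt hne ht
    exact le_trans haS (F.mono hat.le)
  have hinf : sInf S ∈ S :=
    ge_of_tendsto ((F.right_continuous _).mono Ioi_subset_Ici_self)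
      (eventually_nhdsWithin_of_forall hright)
  ext t
  exact ⟨fun ht => csInf_le hbdd ht, fun ht => (hinf : α ≤ F _).trans (F.mono ht)⟩

theorem exists_pos_setOf_le_cdf_eq_Ici {ρ : Measure ℝ} [IsProbabilityMeasure ρ]
    [NullSingletonClass ρ] (hρ : ρ (Iio 0) = 0) {α : ℝ} (hα0 : 0 < α) (hα1 : α < 1) :
    ∃ c, 0 < c ∧ {t | α ≤ cdf ρ t} = Ici c ∧ ρ.real (Ici c) ≤ 1 - α := by
  have hcdf0 : cdf ρ 0 = 0 := by
    rw [cdf_eq_real, measureReal_def, ← measure_congr Iio_ae_eq_Iic, hρ, ENNReal.toReal_zero]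
  have hS := (cdf ρ).setOf_le_eq_Ici_sInf
    ((tendsto_cdf_atTop (μ := ρ)).eventually (eventually_ge_nhds hα1)).exists
    ⟨0, by rwa [hcdf0]⟩
  set c := sInf {t | α ≤ cdf ρ t}
  have hc : α ≤ cdf ρ c := (hS.symm ▸ self_mem_Ici : c ∈ {t | α ≤ cdf ρ t})
  refine ⟨c, lt_of_not_ge fun hc0 => ?_, hS, ?_⟩
  · have h0 : (0 : ℝ) ∈ {t | α ≤ cdf ρ t} := hS ▸ hc0
    exact (h0.trans_eq hcdf0).not_gt hα0
  · calc ρ.real (Ici c) = ρ.real (Iic c)ᶜ := by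
          rw [measureReal_congr (Ioi_ae_eq_Ici.symm), compl_Iic]
      _ = 1 - cdf ρ c := by rw [measureReal_compl measurableSet_Iic, cdf_eq_real, probReal_univ]
      _ ≤ 1 - α := by linarith

variable {X : Type*} [MeasurableSpace X] {ν : Measure X}

theorem setIntegral_le_setIntegral_of_nonneg_of_nonpos {g : X → ℝ} (hg : Integrable g ν)
    {A B : Set X} (hA : MeasurableSet A) (hB : MeasurableSet B)
    (hpos : ∀ x ∈ A, 0 ≤ g x) (hneg : ∀ x ∉ A, g x ≤ 0) :
    ∫ x in B, g x ∂ν ≤ ∫ x in A, g x ∂ν := by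
  rw [← integral_indicator hA, ← integral_indicator hB]
  refine integral_mono (hg.indicator hB) (hg.indicator hA) fun x => ?_
  by_cases hxA : x ∈ A <;> by_cases hxB : x ∈ B <;>
    simp [indicator_of_mem, indicator_of_notMem, hxA, hxB, hpos, hneg]

/-- The Neyman–Pearson lemma. -/
theorem setIntegral_le_of_likelihoodRatio {f μ : X → ℝ} (hf : Integrable f ν)
    (hμ : Integrable μ ν) {c : ℝ} (hc : 0 < c) {A B : Set X} (hA : MeasurableSet A)
    (hB : MeasurableSet B) (hAf : ∀ x ∈ A, c * μ x ≤ f x) (hAcf : ∀ x ∉ A, f x ≤ c * μ x)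
    (hfAB : ∫ x in A, f x ∂ν ≤ ∫ x in B, f x ∂ν) :
    ∫ x in A, μ x ∂ν ≤ ∫ x in B, μ x ∂ν := by
  have hsplit : ∀ E : Set X,
      ∫ x in E, f x - c * μ x ∂ν = ∫ x in E, f x ∂ν - c * ∫ x in E, μ x ∂ν := fun E => by
    rw [integral_sub hf.integrableOn (hμ.const_mul c).integrableOn, integral_const_mul]
  have hsign := setIntegral_le_setIntegral_of_nonneg_of_nonpos (g := fun x => f x - c * μ x)
    (hf.sub (hμ.const_mul c)) hA hB (fun x hx => sub_nonneg.2 (hAf x hx))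
    (fun x hx => sub_nonpos.2 (hAcf x hx))
  rw [hsplit, hsplit] at hsign
  exact le_of_mul_le_mul_left (by linarith) hc

theorem integrable_of_isFiniteMeasure_withDensity_ofReal {f : X → ℝ} (hf : Measurable f)
    (hf0 : 0 ≤ f) [IsFiniteMeasure (ν.withDensity fun x => ENNReal.ofReal (f x))] :
    Integrable f ν := by
  refine ⟨hf.aestronglyMeasurable, ?_⟩
  rw [hasFiniteIntegral_iff_ofReal (Eventually.of_forall hf0), ← setLIntegral_univ,
    ← withDensity_apply _ MeasurableSet.univ]
  exact measure_lt_top _ _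

theorem setIntegral_eq_withDensity_ofReal_real {f : X → ℝ} (hf : Measurable f)
    (hf0 : 0 ≤ f) [IsFiniteMeasure (ν.withDensity fun x => ENNReal.ofReal (f x))]
    {E : Set X} (hE : MeasurableSet E) :
    ∫ x in E, f x ∂ν = (ν.withDensity fun x => ENNReal.ofReal (f x)).real E := by
  rw [measureReal_def, withDensity_apply _ hE, ← ofReal_integral_eq_lintegral_ofReal
    (integrable_of_isFiniteMeasure_withDensity_ofReal hf hf0).integrableOn
    (Eventually.of_forall hf0), ENNReal.toReal_ofReal (setIntegral_nonneg hE fun x _ => hf0 x)]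

theorem integral_card_mul_eq_sum_setIntegral {ι : Type*} [Fintype ι] {μ : X → ℝ}
    (hμ : Integrable μ ν) (C : X → Finset ι) (hC : ∀ k, MeasurableSet {x | k ∈ C x}) :
    ∫ x, ((C x).card : ℝ) * μ x ∂ν = ∑ k, ∫ x in {x | k ∈ C x}, μ x ∂ν := by
  have hpt : ∀ x, ((C x).card : ℝ) * μ x = ∑ k, {y | k ∈ C y}.indicator μ x := fun x => by
    classical
    simp [indicator_apply, Finset.sum_ite_mem]
  simp_rw [hpt, ← integral_indicator (hC _)]
  exact integral_finsetSum _ fun k _ => hμ.indicator (hC k)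

theorem measurableSet_setOf_le_measureReal_setOf_le {P : Measure X} [IsFiniteMeasure P]
    {s : X → ℝ} (hs : Measurable s) (α : ℝ) :
    MeasurableSet {x | α ≤ P.real {y | s y ≤ s x}} :=
  have hmono : Monotone fun t => P.real {y | s y ≤ t} :=
    fun _ _ h => measureReal_mono fun _ hy => le_trans hy h
  measurableSet_le measurable_const (hmono.measurable.comp hs)

theorem setIntegral_superlevel_le_of_coverage {f μ s : X → ℝ} (hf : Measurable f) (hf0 : 0 ≤ f)
    (hμ : Measurable μ) (hμpos : ∀ x, 0 < μ x) (hμint : Integrable μ ν)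
    {P : Measure X} [IsProbabilityMeasure P]
    (hP : P = ν.withDensity fun x => ENNReal.ofReal (f x)) (hs : ∀ x, s x = f x / μ x)
    (hatomless : ∀ t, P {x | s x = t} = 0) {α : ℝ} (hα0 : 0 < α) (hα1 : α < 1)
    {B : Set X} (hB : MeasurableSet B) (hcov : 1 - α ≤ P.real B) :
    ∫ x in {x | α ≤ P.real {y | s y ≤ s x}}, μ x ∂ν ≤ ∫ x in B, μ x ∂ν := by
  have hsm : Measurable s := (funext hs : s = fun x => f x / μ x) ▸ hf.div hμ
  have : IsProbabilityMeasure (P.map s) := Measure.isProbabilityMeasure_map hsm.aemeasurable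
  have : NullSingletonClass (P.map s) :=
    ⟨fun t => by rw [Measure.map_apply hsm (measurableSet_singleton t)]; exact hatomless t⟩
  have hsupp : P.map s (Iio 0) = 0 := by
    rw [Measure.map_apply hsm measurableSet_Iio, ← measure_empty (μ := P)]
    congr 1
    ext x
    simpa [hs x] using div_nonneg (hf0 x) (hμpos x).le
  obtain ⟨c, hc0, hsuper, hmass⟩ := exists_pos_setOf_le_cdf_eq_Ici hsupp hα0 hα1
  have hregion : {x | α ≤ P.real {y | s y ≤ s x}} = s ⁻¹' Ici c := by
    ext x
    rw [mem_preimage, ← hsuper]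
    change _ ↔ α ≤ cdf (P.map s) (s x)
    rw [cdf_eq_real, map_measureReal_apply hsm measurableSet_Iic]
    rfl
  subst hP
  rw [hregion]
  refine setIntegral_le_of_likelihoodRatio
    (integrable_of_isFiniteMeasure_withDensity_ofReal hf hf0) hμint hc0 (hsm measurableSet_Ici) hB
    (fun x hx => ?_) (fun x hx => ?_) ?_
  · rwa [mem_preimage, mem_Ici, hs, le_div_iff₀ (hμpos x)] at hx
  · rw [mem_preimage, mem_Ici, not_le, hs, div_lt_iff₀ (hμpos x)] at hx
    exact hx.le
  · rw [setIntegral_eq_withDensity_ofReal_real hf hf0 (hsm measurableSet_Ici),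
      setIntegral_eq_withDensity_ofReal_real hf hf0 hB,
      ← map_measureReal_apply hsm measurableSet_Ici]
    linarith

end

open scoped Classical

theorem oracle_optimality_general {X : Type*} [MeasurableSpace X] (ν : Measure X)
    (K : ℕ) (f : Fin K → X → ℝ)
    (hf : ∀ k, Measurable (f k)) (hf0 : ∀ k x, 0 ≤ f k x)
    (P : Fin K → Measure X)
    (hP : ∀ k, P k = ν.withDensity (fun x => ENNReal.ofReal (f k x)))
    (hprob : ∀ k, IsProbabilityMeasure (P k))
    (μ : X → ℝ) (hμ : Measurable μ) (hμpos : ∀ x, 0 < μ x)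
    (hμint : Integrable μ ν)
    (s : Fin K → X → ℝ) (hs : ∀ k x, s k x = f k x / μ x)
    (F : Fin K → ℝ → ℝ) (hF : ∀ k t, F k t = (P k {x' | s k x' ≤ t}).toReal)
    (hatomless : ∀ (k : Fin K) (t : ℝ), P k {x' | s k x' = t} = 0)
    (α : ℝ) (hα0 : 0 < α) (hα1 : α < 1)
    (C' : X → Finset (Fin K))
    (hC'meas : ∀ k : Fin K, MeasurableSet {x | k ∈ C' x})
    (hC'cov : ∀ k : Fin K, 1 - α ≤ (P k {x | k ∈ C' x}).toReal) :
    ∫ x, ((Finset.univ.filter (fun k : Fin K => α ≤ F k (s k x))).card : ℝ) * μ x ∂ν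
      ≤ ∫ x, ((C' x).card : ℝ) * μ x ∂ν := by
  have hsm : ∀ k, Measurable (s k) := fun k => (funext (hs k) : s k = _) ▸ (hf k).div hμ
  simp only [hF, ← measureReal_def]
  have horacle := integral_card_mul_eq_sum_setIntegral hμint
    (fun x => Finset.univ.filter fun k => α ≤ (P k).real {y | s k y ≤ s k x})
    (fun k => by simpa using measurableSet_setOf_le_measureReal_setOf_le (hsm k) α)
  simp only [Finset.mem_filter, Finset.mem_univ, true_and] at horacle
  rw [horacle, integral_card_mul_eq_sum_setIntegral hμint C' hC'meas]
  exact Finset.sum_le_sum fun k _ => setIntegral_superlevel_le_of_coverage (hf k) (hf0 k) hμ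
    hμpos hμint (hP k) (hs k) (hatomless k) hα0 hα1 (hC'meas k) (hC'cov k)

/-- Optimality of the oracle construction (Proposition 1): among all measurable
set-valued predictions `C'` with per-class coverage at least `1 - α`, the oracle
`C x = {k | F k (s k x) ≥ α}` (with score `s k x = f k x / μ x` and atomless
score distributions) minimizes the `μ`-weighted expected prediction-set size. -/
theorem oracle_optimality {X : Type*} [MeasurableSpace X] (ν : Measure X) [SigmaFinite ν]
    (K : ℕ) (f : Fin K → X → ℝ)
    (hf : ∀ k, Measurable (f k)) (hf0 : ∀ k x, 0 ≤ f k x)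
    (P : Fin K → Measure X)
    (hP : ∀ k, P k = ν.withDensity (fun x => ENNReal.ofReal (f k x)))
    (hprob : ∀ k, IsProbabilityMeasure (P k))
    (μ : X → ℝ) (hμ : Measurable μ) (hμpos : ∀ x, 0 < μ x)
    (hμint : Integrable μ ν)
    (s : Fin K → X → ℝ) (hs : ∀ k x, s k x = f k x / μ x)
    (F : Fin K → ℝ → ℝ) (hF : ∀ k t, F k t = (P k {x' | s k x' ≤ t}).toReal)
    (hatomless : ∀ (k : Fin K) (t : ℝ), P k {x' | s k x' = t} = 0)
    (α : ℝ) (hα0 : 0 < α) (hα1 : α < 1)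
    (C' : X → Finset (Fin K))
    (hC'meas : ∀ k : Fin K, MeasurableSet {x | k ∈ C' x})
    (hC'cov : ∀ k : Fin K, 1 - α ≤ (P k {x | k ∈ C' x}).toReal) :
    ∫ x, ((Finset.univ.filter (fun k : Fin K => α ≤ F k (s k x))).card : ℝ) * μ x ∂ν
      ≤ ∫ x, ((C' x).card : ℝ) * μ x ∂ν :=
  oracle_optimality_general ν K f hf hf0 P hP hprob μ hμ hμpos hμint s hs F hF hatomless α hα0 hα1
    C' hC'meas hC'cov
end
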